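/- arXiv:2409.09624 — 2 statements merged into one kernel-verified Lean document; each statement's English description precedes it below -/
import Mathlib

section
/- Let Λ > 1 and M₁, …, M_{p-1} > 1 be real numbers. Define g₃(r) = Λ(1 - Λr)/(Λ - r) - Σ_{k=1}^{p-1} (M_k - 1/M_k) · r^{k+1}(2 - r + k(1-r))/(1-r)² - Σ_{k=1}^{p-1} (k+1) r^k for r ∈ [0,1). Then g₃ is strictly decreasing on [0,1) and there exists a unique ρ₄ ∈ (0,1) with g₃(ρ₄) = 0. -/
/-!
The Möbius part `Λ(1 - Λr)/(Λ - r)` is strictly decreasing on `r < Λ` because `Λ² > 1`,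
while everything subtracted from it is a nonnegative combination of the functions
`rⁿ/(1 - r)ᵐ`, which increase on `[0, 1)`. Hence `g₃` is strictly decreasing there. Since
`g₃ 0 = 1` and the Möbius part vanishes at `1/Λ`, we have `g₃ (1/Λ) ≤ 0`, and the
intermediate value theorem gives the zero.
-/

open Finset Set

theorem strictAntiOn_mul_one_sub_mul_div_sub {Λ : ℝ} (hΛ : 1 < Λ) :
    StrictAntiOn (fun r => Λ * (1 - Λ * r) / (Λ - r)) (Iio Λ) := by
  intro a ha b hb hab
  rw [div_lt_div_iff₀ (sub_pos.2 hb) (sub_pos.2 ha)]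
  have hpos : 0 < Λ * ((b - a) * (Λ ^ 2 - 1)) := by
    have : 0 < Λ ^ 2 - 1 := by nlinarith
    positivity
  linarith [show Λ * (1 - Λ * a) * (Λ - b) - Λ * (1 - Λ * b) * (Λ - a)
    = Λ * ((b - a) * (Λ ^ 2 - 1)) by ring]

theorem monotoneOn_pow_div_one_sub_pow (n m : ℕ) :
    MonotoneOn (fun r : ℝ => r ^ n / (1 - r) ^ m) (Ico 0 1) := by
  rintro a ⟨ha0, -⟩ b ⟨-, hb1⟩ hab
  exact div_le_div₀ (pow_nonneg (ha0.trans hab) n) (pow_le_pow_left₀ ha0 hab n)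
    (pow_pos (sub_pos.2 hb1) m) (pow_le_pow_left₀ (sub_nonneg.2 hb1.le) (by linarith) m)

theorem pow_mul_div_one_sub_sq_eq {r : ℝ} (hr : r ≠ 1) (k : ℕ) :
    r ^ (k + 1) * (2 - r + k * (1 - r)) / (1 - r) ^ 2
      = (k + 1) * (r ^ (k + 1) / (1 - r)) + r ^ (k + 1) / (1 - r) ^ 2 := by
  have : 1 - r ≠ 0 := sub_ne_zero.2 hr.symm
  field_simp
  ring

theorem monotoneOn_pow_mul_div_one_sub_sq (k : ℕ) :
    MonotoneOn (fun r : ℝ => r ^ (k + 1) * (2 - r + k * (1 - r)) / (1 - r) ^ 2) (Ico 0 1) := by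
  intro a ha b hb hab
  have h1 := monotoneOn_pow_div_one_sub_pow (k + 1) 1 ha hb hab
  have h2 := monotoneOn_pow_div_one_sub_pow (k + 1) 2 ha hb hab
  simp only [pow_one] at h1
  simp only [pow_mul_div_one_sub_sq_eq ha.2.ne, pow_mul_div_one_sub_sq_eq hb.2.ne]
  gcongr

theorem monotoneOn_finset_sum_mul {ι α β : Type*} [Preorder α] [Semiring β] [PartialOrder β]
    [IsOrderedRing β] {s : Set α} (t : Finset ι) {c : ι → β} {f : ι → α → β}
    (hc : ∀ i ∈ t, 0 ≤ c i) (hf : ∀ i ∈ t, MonotoneOn (f i) s) :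
    MonotoneOn (fun x => ∑ i ∈ t, c i * f i x) s :=
  fun _ ha _ hb hab =>
    sum_le_sum fun i hi => mul_le_mul_of_nonneg_left (hf i hi ha hb hab) (hc i hi)

noncomputable def correctionSum (c : ℕ → ℝ) (s : Finset ℕ) (r : ℝ) : ℝ :=
  ∑ k ∈ s, c k * (r ^ (k + 1) * (2 - r + k * (1 - r)) / (1 - r) ^ 2)
    + ∑ k ∈ s, ((k : ℝ) + 1) * r ^ k

theorem monotoneOn_correctionSum {c : ℕ → ℝ} {s : Finset ℕ} (hc : ∀ k ∈ s, 0 ≤ c k) :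
    MonotoneOn (correctionSum c s) (Ico 0 1) :=
  (monotoneOn_finset_sum_mul s hc fun k _ => monotoneOn_pow_mul_div_one_sub_sq k).add
    (monotoneOn_finset_sum_mul s (fun k _ => by positivity)
      fun k _ _ ha _ _ hab => pow_le_pow_left₀ ha.1 hab k)

theorem correctionSum_zero (c : ℕ → ℝ) {s : Finset ℕ} (hs : 0 ∉ s) :
    correctionSum c s 0 = 0 := by
  have : ∀ k ∈ s, ((k : ℝ) + 1) * 0 ^ k = 0 := fun k hk => by
    rw [zero_pow (ne_of_mem_of_not_mem hk hs), mul_zero]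
  simp [correctionSum, sum_eq_zero this]

theorem continuousOn_correctionSum (c : ℕ → ℝ) (s : Finset ℕ) :
    ContinuousOn (correctionSum c s) (Iio 1) := by
  have : ∀ r ∈ Iio (1 : ℝ), (1 - r) ^ 2 ≠ 0 := fun r hr => pow_ne_zero 2 (sub_pos.2 hr).ne'
  unfold correctionSum
  fun_prop (disch := assumption)

theorem StrictAntiOn.existsUnique_mem_Ioo_eq {f : ℝ → ℝ} {a b c y : ℝ}
    (hf : StrictAntiOn f (Ico a b)) (hc : c ∈ Ioo a b) (hfc : ContinuousOn f (Icc a c))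
    (hya : y < f a) (hyc : f c ≤ y) : ∃! x, x ∈ Ioo a b ∧ f x = y := by
  obtain ⟨x, hx, hfx⟩ := intermediate_value_Icc' hc.1.le hfc ⟨hyc, hya.le⟩
  have hxa : a < x := hx.1.lt_of_ne (by rintro rfl; exact hya.ne' hfx)
  refine ⟨x, ⟨⟨hxa, hx.2.trans_lt hc.2⟩, hfx⟩, fun z ⟨hz, hfz⟩ => ?_⟩
  exact hf.injOn ⟨hz.1.le, hz.2⟩ ⟨hxa.le, hx.2.trans_lt hc.2⟩ (hfz.trans hfx.symm)

theorem stmt2_general (p : ℕ) (Λ : ℝ) (hΛ : 1 < Λ) (M : ℕ → ℝ)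
    (hM : ∀ k ∈ Finset.Icc 1 (p - 1), 1 < M k)
    (g₃ : ℝ → ℝ)
    (hg₃ : ∀ r, g₃ r = Λ * (1 - Λ * r) / (Λ - r)
      - ∑ k ∈ Finset.Icc 1 (p - 1),
          (M k - 1 / M k) * (r ^ (k + 1) * (2 - r + (k : ℝ) * (1 - r)) / (1 - r) ^ 2)
      - ∑ k ∈ Finset.Icc 1 (p - 1), ((k : ℝ) + 1) * r ^ k) :
    StrictAntiOn g₃ (Set.Ico 0 1) ∧
    ∃! ρ₄ : ℝ, ρ₄ ∈ Set.Ioo 0 1 ∧ g₃ ρ₄ = 0 := by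
  set C := correctionSum (fun k => M k - 1 / M k) (Icc 1 (p - 1))
  have hg : g₃ = fun r => Λ * (1 - Λ * r) / (Λ - r) - C r := funext fun r => by
    simp only [hg₃, C, correctionSum]; ring
  have hC : MonotoneOn C (Ico 0 1) := monotoneOn_correctionSum fun k hk =>
    sub_nonneg.2 (((div_le_one₀ (by linarith [hM k hk])).2 (hM k hk).le).trans (hM k hk).le)
  have hC0 : C 0 = 0 := correctionSum_zero _ (by simp)
  have hanti : StrictAntiOn g₃ (Ico 0 1) := fun a ha b hb hab => by
    simp only [hg]
    linarith [strictAntiOn_mul_one_sub_mul_div_sub hΛ (ha.2.trans hΛ) (hb.2.trans hΛ) hab,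
      hC ha hb hab.le]
  have hρ : Λ⁻¹ ∈ Ioo (0 : ℝ) 1 := ⟨by positivity, inv_lt_one_of_one_lt₀ hΛ⟩
  refine ⟨hanti, hanti.existsUnique_mem_Ioo_eq hρ ?_ ?_ ?_⟩
  · have hΛr : ∀ r ∈ Icc 0 Λ⁻¹, Λ - r ≠ 0 := fun r hr => by linarith [hr.2, hρ.2]
    rw [hg]
    exact (continuousOn_const.mul (by fun_prop)).div (by fun_prop) hΛr |>.sub
      ((continuousOn_correctionSum _ _).mono fun r hr => hr.2.trans_lt hρ.2)
  · simp [hg, hC0, (zero_lt_one.trans hΛ).ne']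
  · have hCρ := hC ⟨le_rfl, zero_lt_one⟩ ⟨hρ.1.le, hρ.2⟩ hρ.1.le
    simp only [hg, mul_inv_cancel₀ (zero_lt_one.trans hΛ).ne', sub_self, mul_zero, zero_div]
    linarith

theorem stmt2 (p : ℕ) (hp : 0 < p) (Λ : ℝ) (hΛ : 1 < Λ) (M : ℕ → ℝ)
    (hM : ∀ k ∈ Finset.Icc 1 (p - 1), 1 < M k)
    (g₃ : ℝ → ℝ)
    (hg₃ : ∀ r, g₃ r = Λ * (1 - Λ * r) / (Λ - r)
      - ∑ k ∈ Finset.Icc 1 (p - 1),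
          (M k - 1 / M k) * (r ^ (k + 1) * (2 - r + (k : ℝ) * (1 - r)) / (1 - r) ^ 2)
      - ∑ k ∈ Finset.Icc 1 (p - 1), ((k : ℝ) + 1) * r ^ k) :
    StrictAntiOn g₃ (Set.Ico 0 1) ∧
    ∃! ρ₄ : ℝ, ρ₄ ∈ Set.Ioo 0 1 ∧ g₃ ρ₄ = 0 :=
  stmt2_general p Λ hΛ M hM g₃ hg₃
end

section
/- Let Λ₁, …, Λ_{p-1} ≥ 0 with Σ_{k=1}^{p-1} (k+1)Λ_k > 1, and let ρ₂ ∈ (0,1) be the root of 1 - Σ_{k=1}^{p-1}(k+1)Λ_k r^k = 0. Let F(z) = z + Σ_{k=1}^{p-1} conj(z)^k A_k(z), where each A_k is analytic on U with A_k(0) = 0 and |A_k'(z)| ≤ Λ_k on U. Then F is injective on the disk {|z| < ρ₂}, and for all z with |z| < ρ₂, the image F({|z| < ρ₂}) contains the disk of radius ρ₂ - Σ_{k=1}^{p-1} Λ_k ρ₂^{k+1} centered at 0. -/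
/-!
Write `F = id + G` with `G z = ∑ conj z ^ k * A k z`. By the mean value theorem each `A k` is
`Λ k`-Lipschitz, and `A k 0 = 0`, so on the closed disk of radius `r < 1` the map `G` is
Lipschitz with constant `L r = ∑ (k + 1) Λ k r ^ k` and bounded by `∑ Λ k r ^ (k + 1)`.
Since `r ^ k ≤ (r / ρ₂) ρ₂ ^ k` for `k ≥ 1`, we get `L r ≤ r / ρ₂ < 1` for `r < ρ₂`, which
gives injectivity. If `‖w‖ < r - ∑ Λ k r ^ (k + 1)`, the map `z ↦ w - G z` is a contraction
of the closed `r`-disk, and its fixed point solves `F z = w`; by continuity such an `r < ρ₂`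
exists for every `w` in the stated disk.
-/

open Metric Set Finset Filter ComplexConjugate

theorem norm_pow_sub_pow_le {𝕜 : Type*} [RCLike 𝕜] {z w : 𝕜} {r : ℝ} (hz : ‖z‖ ≤ r)
    (hw : ‖w‖ ≤ r) (k : ℕ) : ‖z ^ k - w ^ k‖ ≤ k * r ^ (k - 1) * ‖z - w‖ := by
  refine (convex_closedBall (0 : 𝕜) r).norm_image_sub_le_of_norm_deriv_le (f := (· ^ k))
    (fun _ _ ↦ differentiableAt_pow k) (fun x hx ↦ ?_) (mem_closedBall_zero_iff.2 hw)
    (mem_closedBall_zero_iff.2 hz)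
  rw [deriv_pow_field, norm_mul, norm_pow, RCLike.norm_natCast]
  gcongr
  exact mem_closedBall_zero_iff.1 hx

theorem norm_le_mul_of_norm_sub_le {E F : Type*} [SeminormedAddCommGroup E]
    [SeminormedAddCommGroup F] {f : E → F} {L r : ℝ} (hL : 0 ≤ L)
    (hf : ∀ u ∈ closedBall (0 : E) r, ∀ v ∈ closedBall (0 : E) r, ‖f u - f v‖ ≤ L * ‖u - v‖)
    (hf0 : f 0 = 0) {z : E} (hz : ‖z‖ ≤ r) : ‖f z‖ ≤ L * r := by
  have h0 : (0 : E) ∈ closedBall 0 r := mem_closedBall_self ((norm_nonneg z).trans hz)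
  simpa [hf0] using (hf z (mem_closedBall_zero_iff.2 hz) 0 h0).trans (by gcongr; simpa using hz)

theorem sum_mul_pow_le_div_mul_sum {S : Finset ℕ} {c : ℕ → ℝ} {r ρ : ℝ}
    (hS : ∀ k ∈ S, 1 ≤ k) (hc : ∀ k ∈ S, 0 ≤ c k) (hr : 0 ≤ r) (hrρ : r ≤ ρ) (hρ : 0 < ρ) :
    ∑ k ∈ S, c k * r ^ k ≤ r / ρ * ∑ k ∈ S, c k * ρ ^ k := by
  rw [mul_sum]
  refine sum_le_sum fun k hk ↦ ?_
  obtain ⟨j, rfl⟩ := Nat.exists_eq_add_of_le' (hS k hk)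
  calc c (j + 1) * r ^ (j + 1) = c (j + 1) * r ^ j * r := by ring
    _ ≤ c (j + 1) * ρ ^ j * r := by gcongr; exact hc _ hk
    _ = r / ρ * (c (j + 1) * ρ ^ (j + 1)) := by field_simp; ring

theorem exists_mem_closedBall_add_eq {E : Type*} [NormedAddCommGroup E] [CompleteSpace E]
    {g : E → E} {r K : ℝ} (hr : 0 ≤ r) (hK : K < 1)
    (hg : ∀ u ∈ closedBall (0 : E) r, ∀ v ∈ closedBall (0 : E) r, ‖g u - g v‖ ≤ K * ‖u - v‖)
    {w : E} (hbound : ∀ z ∈ closedBall (0 : E) r, ‖w‖ + ‖g z‖ ≤ r) :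
    ∃ z ∈ closedBall (0 : E) r, z + g z = w := by
  have hmaps : MapsTo (fun z ↦ w - g z) (closedBall 0 r) (closedBall 0 r) := fun z hz ↦
    mem_closedBall_zero_iff.2 ((norm_sub_le _ _).trans (hbound z hz))
  have hlip : LipschitzOnWith K.toNNReal (fun z ↦ w - g z) (closedBall 0 r) :=
    LipschitzOnWith.of_dist_le' fun u hu v hv ↦ by
      rw [dist_eq_norm, dist_eq_norm, sub_sub_sub_cancel_left, norm_sub_rev]
      exact hg u hu v hv
  have hcontr : ContractingWith K.toNNReal (hmaps.restrict _ _ _) :=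
    ⟨Real.toNNReal_lt_one.2 hK, hlip.mapsToRestrict hmaps⟩
  obtain ⟨z, hz, hfix, -⟩ := hcontr.exists_fixedPoint' isClosed_closedBall.isComplete hmaps
    (mem_closedBall_self hr) (edist_ne_top _ _)
  exact ⟨z, hz, eq_sub_iff_add_eq.1 hfix.symm⟩

def polyanalyticTail (S : Finset ℕ) (A : ℕ → ℂ → ℂ) (z : ℂ) : ℂ :=
  ∑ k ∈ S, conj z ^ k * A k z

section PolyanalyticTail

variable {S : Finset ℕ} {Λ : ℕ → ℝ} {A : ℕ → ℂ → ℂ} {r : ℝ} {z w : ℂ}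

theorem norm_conj_pow_mul_sub_conj_pow_mul_le {f : ℂ → ℂ} {L : ℝ} (k : ℕ) (hL : 0 ≤ L)
    (hf : ∀ u ∈ closedBall (0 : ℂ) r, ∀ v ∈ closedBall (0 : ℂ) r, ‖f u - f v‖ ≤ L * ‖u - v‖)
    (hf0 : f 0 = 0) (hz : ‖z‖ ≤ r) (hw : ‖w‖ ≤ r) :
    ‖conj z ^ k * f z - conj w ^ k * f w‖ ≤ (k + 1) * L * r ^ k * ‖z - w‖ := by
  have hr : 0 ≤ r := (norm_nonneg z).trans hz
  have hfz : ‖f z - f w‖ ≤ L * ‖z - w‖ :=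
    hf z (mem_closedBall_zero_iff.2 hz) w (mem_closedBall_zero_iff.2 hw)
  have hconj : ‖conj z ^ k - conj w ^ k‖ ≤ k * r ^ (k - 1) * ‖z - w‖ := by
    simpa [← map_sub] using
      norm_pow_sub_pow_le (z := conj z) (w := conj w) (by simpa using hz) (by simpa using hw) k
  have hrk : k * r ^ (k - 1) * r = k * r ^ k := by
    rcases k with _ | k
    · simp
    · rw [mul_assoc, ← pow_succ, Nat.add_sub_cancel]
  calc ‖conj z ^ k * f z - conj w ^ k * f w‖
      = ‖conj z ^ k * (f z - f w) + (conj z ^ k - conj w ^ k) * f w‖ := by ring_nf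
    _ ≤ r ^ k * (L * ‖z - w‖) + k * r ^ (k - 1) * ‖z - w‖ * (L * r) := by
      refine (norm_add_le _ _).trans (add_le_add ?_ ?_) <;> rw [norm_mul]
      · rw [norm_pow, Complex.norm_conj]
        gcongr
      · gcongr
        exact norm_le_mul_of_norm_sub_le hL hf hf0 hw
    _ = (k + 1) * L * r ^ k * ‖z - w‖ := by linear_combination L * ‖z - w‖ * hrk

theorem norm_polyanalyticTail_sub_le (hΛ : ∀ k ∈ S, 0 ≤ Λ k)
    (hA : ∀ k ∈ S, ∀ u ∈ closedBall (0 : ℂ) r, ∀ v ∈ closedBall (0 : ℂ) r,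
      ‖A k u - A k v‖ ≤ Λ k * ‖u - v‖)
    (hA0 : ∀ k ∈ S, A k 0 = 0) (hz : ‖z‖ ≤ r) (hw : ‖w‖ ≤ r) :
    ‖polyanalyticTail S A z - polyanalyticTail S A w‖
      ≤ (∑ k ∈ S, (k + 1) * Λ k * r ^ k) * ‖z - w‖ := by
  rw [polyanalyticTail, polyanalyticTail, ← sum_sub_distrib, sum_mul]
  exact (norm_sum_le _ _).trans <| sum_le_sum fun k hk ↦
    norm_conj_pow_mul_sub_conj_pow_mul_le k (hΛ k hk) (hA k hk) (hA0 k hk) hz hw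

theorem norm_polyanalyticTail_le (hΛ : ∀ k ∈ S, 0 ≤ Λ k)
    (hA : ∀ k ∈ S, ∀ u ∈ closedBall (0 : ℂ) r, ∀ v ∈ closedBall (0 : ℂ) r,
      ‖A k u - A k v‖ ≤ Λ k * ‖u - v‖)
    (hA0 : ∀ k ∈ S, A k 0 = 0) (hz : ‖z‖ ≤ r) :
    ‖polyanalyticTail S A z‖ ≤ ∑ k ∈ S, Λ k * r ^ (k + 1) := by
  refine (norm_sum_le _ _).trans <| sum_le_sum fun k hk ↦ ?_
  rw [norm_mul, norm_pow, Complex.norm_conj]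
  calc ‖z‖ ^ k * ‖A k z‖ ≤ r ^ k * (Λ k * r) :=
        mul_le_mul (pow_le_pow_left₀ (norm_nonneg z) hz k)
          (norm_le_mul_of_norm_sub_le (hΛ k hk) (hA k hk) (hA0 k hk) hz) (norm_nonneg _)
          (pow_nonneg ((norm_nonneg z).trans hz) k)
    _ = Λ k * r ^ (k + 1) := by ring

variable {ρ : ℝ}

theorem injOn_add_polyanalyticTail (hΛ : ∀ k ∈ S, 0 ≤ Λ k)
    (hA : ∀ r < ρ, ∀ k ∈ S, ∀ u ∈ closedBall (0 : ℂ) r, ∀ v ∈ closedBall (0 : ℂ) r,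
      ‖A k u - A k v‖ ≤ Λ k * ‖u - v‖)
    (hA0 : ∀ k ∈ S, A k 0 = 0) (hL : ∀ r, 0 ≤ r → r < ρ → ∑ k ∈ S, (k + 1) * Λ k * r ^ k < 1) :
    InjOn (fun z ↦ z + polyanalyticTail S A z) (ball 0 ρ) := by
  intro z hz w hw hzw
  rw [mem_ball_zero_iff] at hz hw
  have hr : max ‖z‖ ‖w‖ < ρ := max_lt hz hw
  have hT := norm_polyanalyticTail_sub_le hΛ (hA _ hr) hA0 (le_max_left ‖z‖ ‖w‖)
    (le_max_right ‖z‖ ‖w‖)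
  rw [show polyanalyticTail S A z - polyanalyticTail S A w = -(z - w) by
    linear_combination hzw, norm_neg] at hT
  have hcontr := hL _ ((norm_nonneg z).trans (le_max_left _ _)) hr
  exact sub_eq_zero.1 (norm_le_zero_iff.1 (by nlinarith [norm_nonneg (z - w)]))

theorem ball_subset_image_add_polyanalyticTail (hρ : 0 < ρ) (hΛ : ∀ k ∈ S, 0 ≤ Λ k)
    (hA : ∀ r < ρ, ∀ k ∈ S, ∀ u ∈ closedBall (0 : ℂ) r, ∀ v ∈ closedBall (0 : ℂ) r,
      ‖A k u - A k v‖ ≤ Λ k * ‖u - v‖)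
    (hA0 : ∀ k ∈ S, A k 0 = 0) (hL : ∀ r, 0 ≤ r → r < ρ → ∑ k ∈ S, (k + 1) * Λ k * r ^ k < 1) :
    ball 0 (ρ - ∑ k ∈ S, Λ k * ρ ^ (k + 1))
      ⊆ (fun z ↦ z + polyanalyticTail S A z) '' ball 0 ρ := by
  intro w hw
  rw [mem_ball_zero_iff] at hw
  obtain ⟨r, hwr, hr0, hrρ⟩ : ∃ r, ‖w‖ < r - ∑ k ∈ S, Λ k * r ^ (k + 1) ∧ r ∈ Ioo 0 ρ :=
    ((((by fun_prop : Continuous fun r : ℝ ↦ r - ∑ k ∈ S, Λ k * r ^ (k + 1)).tendsto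
      ρ).mono_left nhdsWithin_le_nhds).eventually (eventually_gt_nhds hw)).and
      (Ioo_mem_nhdsLT hρ) |>.exists
  obtain ⟨z, hz, hFz⟩ := exists_mem_closedBall_add_eq hr0.le (hL r hr0.le hrρ)
    (fun u hu v hv ↦ norm_polyanalyticTail_sub_le hΛ (hA r hrρ) hA0
      (mem_closedBall_zero_iff.1 hu) (mem_closedBall_zero_iff.1 hv))
    (fun u hu ↦ by
      linarith [norm_polyanalyticTail_le hΛ (hA r hrρ) hA0 (mem_closedBall_zero_iff.1 hu)])
  exact ⟨z, mem_ball_zero_iff.2 ((mem_closedBall_zero_iff.1 hz).trans_lt hrρ), hFz⟩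

end PolyanalyticTail

theorem stmt9_general (p : ℕ) (Λ : ℕ → ℝ)
    (hΛ : ∀ k ∈ Finset.Icc 1 (p - 1), 0 ≤ Λ k)
    (ρ₂ : ℝ) (hρ₂ : ρ₂ ∈ Set.Ioo (0 : ℝ) 1)
    (hroot : ∑ k ∈ Finset.Icc 1 (p - 1), ((k : ℝ) + 1) * Λ k * ρ₂ ^ k = 1)
    (A : ℕ → ℂ → ℂ)
    (hA : ∀ k ∈ Finset.Icc 1 (p - 1), DifferentiableOn ℂ (A k) (Metric.ball 0 1))
    (hA0 : ∀ k ∈ Finset.Icc 1 (p - 1), A k 0 = 0)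
    (hAk' : ∀ k ∈ Finset.Icc 1 (p - 1), ∀ z ∈ Metric.ball (0 : ℂ) 1,
      ‖deriv (A k) z‖ ≤ Λ k)
    (F : ℂ → ℂ)
    (hF : ∀ z, F z = z + ∑ k ∈ Finset.Icc 1 (p - 1), (starRingEnd ℂ z) ^ k * A k z) :
    Set.InjOn F (Metric.ball 0 ρ₂) ∧
    Metric.ball (0 : ℂ) (ρ₂ - ∑ k ∈ Finset.Icc 1 (p - 1), Λ k * ρ₂ ^ (k + 1))
      ⊆ F '' (Metric.ball 0 ρ₂) := by
  obtain ⟨hρ0, hρ1⟩ := hρ₂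
  set S := Finset.Icc 1 (p - 1)
  have hFG : F = fun z ↦ z + polyanalyticTail S A z := funext hF
  have hLip : ∀ r < ρ₂, ∀ k ∈ S, ∀ u ∈ closedBall (0 : ℂ) r,
      ∀ v ∈ closedBall (0 : ℂ) r, ‖A k u - A k v‖ ≤ Λ k * ‖u - v‖ := fun r hr k hk u hu v hv ↦
    (convex_ball (0 : ℂ) 1).norm_image_sub_le_of_norm_deriv_le
      (fun x hx ↦ (hA k hk).differentiableAt (isOpen_ball.mem_nhds hx)) (hAk' k hk)
      (closedBall_subset_ball (hr.trans hρ1) hv) (closedBall_subset_ball (hr.trans hρ1) hu)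
  have hL (r : ℝ) (hr : 0 ≤ r) (hrρ : r < ρ₂) :
      ∑ k ∈ S, ((k : ℝ) + 1) * Λ k * r ^ k < 1 := by
    have := sum_mul_pow_le_div_mul_sum (c := fun k ↦ ((k : ℝ) + 1) * Λ k)
      (fun k hk ↦ (mem_Icc.1 hk).1) (fun k hk ↦ by have := hΛ k hk; positivity) hr hrρ.le hρ0
    rw [hroot, mul_one] at this
    exact this.trans_lt ((div_lt_one hρ0).2 hrρ)
  rw [hFG]
  exact ⟨injOn_add_polyanalyticTail hΛ hLip hA0 hL,
    ball_subset_image_add_polyanalyticTail hρ0 hΛ hLip hA0 hL⟩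

theorem stmt9 (p : ℕ) (hp : 0 < p) (Λ : ℕ → ℝ)
    (hΛ : ∀ k ∈ Finset.Icc 1 (p - 1), 0 ≤ Λ k)
    (hsum : 1 < ∑ k ∈ Finset.Icc 1 (p - 1), ((k : ℝ) + 1) * Λ k)
    (ρ₂ : ℝ) (hρ₂ : ρ₂ ∈ Set.Ioo (0 : ℝ) 1)
    (hroot : ∑ k ∈ Finset.Icc 1 (p - 1), ((k : ℝ) + 1) * Λ k * ρ₂ ^ k = 1)
    (A : ℕ → ℂ → ℂ)
    (hA : ∀ k ∈ Finset.Icc 1 (p - 1), DifferentiableOn ℂ (A k) (Metric.ball 0 1))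
    (hA0 : ∀ k ∈ Finset.Icc 1 (p - 1), A k 0 = 0)
    (hAk' : ∀ k ∈ Finset.Icc 1 (p - 1), ∀ z ∈ Metric.ball (0 : ℂ) 1,
      ‖deriv (A k) z‖ ≤ Λ k)
    (F : ℂ → ℂ)
    (hF : ∀ z, F z = z + ∑ k ∈ Finset.Icc 1 (p - 1), (starRingEnd ℂ z) ^ k * A k z) :
    Set.InjOn F (Metric.ball 0 ρ₂) ∧
    Metric.ball (0 : ℂ) (ρ₂ - ∑ k ∈ Finset.Icc 1 (p - 1), Λ k * ρ₂ ^ (k + 1))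
      ⊆ F '' (Metric.ball 0 ρ₂) :=
  stmt9_general p Λ hΛ ρ₂ hρ₂ hroot A hA hA0 hAk' F hF
end
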